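/- Let T ∈ ℝ, τ > 0, ω(t) = exp((t−T)/τ), x(t) = ω(t) for t ≤ T, and let I : (−∞,T] → ℝ be continuous, nonnegative and bounded, with V₀(t) = ∫_t^T I(s) ds. Fix n ≥ 1 and let P_n be the space of real polynomials of degree < n. If ψ ∈ P_n is nonzero and satisfies, for some λ ∈ ℝ, ∫_{−∞}^T φ(x(t)) V₀(t) ψ(x(t)) ω(t) dt = λ ∫_{−∞}^T φ(x(t)) (T−t) ψ(x(t)) ω(t) dt for every φ ∈ P_n, then λ · ∫_{−∞}^T ψ(x(t))² ω(t) dt = ∫_{−∞}^T I(t) ψ(x(t))² ω(t) dt; that is, in the eigenstates of the aggregated execution flow V/t, the aggregated execution flow equals the local execution flow: λ = ⟨ψ|I|ψ⟩/⟨ψ|ψ⟩. -/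

import Mathlib

open MeasureTheory Set Polynomial Filter Topology

/-!
Test the eigenvalue equation against `φ = ψ + 2 X ψ'`, which has degree at most that of `ψ`.
Since `(X ψ²)' = ψ φ` and `x' = x / τ`, the function `τ ψ(x)² ω = τ (X ψ²)(x)` is a primitive
of `φ(x) ψ(x) ω`. Integrating by parts against `G(t) = ∫ₜᵀ i` therefore gives
`∫ φ(x) G ψ(x) ω = τ ∫ i ψ(x)² ω`: the boundary term vanishes at `T` because `G(T) = 0`, and
at `-∞` because `G` grows at most linearly (`i` is bounded) while `ω` decays exponentially.
For `i = I` this is `τ ⟨ψ|I|ψ⟩`, for `i = 1` (so `G(t) = T - t`) it is `τ ⟨ψ|ψ⟩`, and the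
eigenvalue equation becomes `τ ⟨ψ|I|ψ⟩ = λ τ ⟨ψ|ψ⟩`.
-/

theorem coeff_add_two_mul_X_mul_derivative {R : Type*} [CommSemiring R] (ψ : R[X]) (m : ℕ) :
    (ψ + 2 * X * derivative ψ).coeff m = (1 + 2 * m) * ψ.coeff m := by
  cases m with
  | zero => simp [mul_assoc]
  | succ m =>
    simp only [mul_assoc, coeff_add, coeff_ofNat_mul, coeff_X_mul, coeff_derivative,
      Nat.cast_add, Nat.cast_one]
    ring

theorem degree_add_two_mul_X_mul_derivative_le {R : Type*} [CommSemiring R] (ψ : R[X]) :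
    (ψ + 2 * X * derivative ψ).degree ≤ ψ.degree := by
  refine (degree_le_iff_coeff_zero _ _).2 fun m hm => ?_
  rw [coeff_add_two_mul_X_mul_derivative, coeff_eq_zero_of_degree_lt hm, mul_zero]

theorem derivative_X_mul_sq {R : Type*} [CommSemiring R] (ψ : R[X]) :
    derivative (X * ψ ^ 2) = ψ * (ψ + 2 * X * derivative ψ) := by
  simp only [derivative_mul, derivative_X, derivative_sq, one_mul, map_ofNat]
  ring

noncomputable def expWeight (T τ t : ℝ) : ℝ := Real.exp ((t - T) / τ)

section expWeight

variable {T τ t : ℝ}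

theorem expWeight_pos : 0 < expWeight T τ t := Real.exp_pos _

theorem expWeight_le_one (hτ : 0 ≤ τ) (ht : t ≤ T) : expWeight T τ t ≤ 1 :=
  Real.exp_le_one_iff.2 (div_nonpos_of_nonpos_of_nonneg (sub_nonpos.2 ht) hτ)

@[fun_prop]
theorem continuous_expWeight : Continuous (expWeight T τ) := by
  unfold expWeight
  fun_prop

theorem hasDerivAt_expWeight : HasDerivAt (expWeight T τ) (expWeight T τ t / τ) t := by
  unfold expWeight
  simpa [div_eq_mul_inv] using (((hasDerivAt_id t).sub_const T).div_const τ).exp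

theorem tendsto_expWeight_atBot (hτ : 0 < τ) : Tendsto (expWeight T τ) atBot (𝓝 0) :=
  Real.tendsto_exp_atBot.comp <|
    (tendsto_atBot_add_const_right _ (-T) tendsto_id).atBot_div_const hτ

theorem sub_mul_expWeight_le (hτ : 0 < τ) :
    (T - t) * expWeight T τ t ≤ 2 * τ * expWeight T (2 * τ) t := by
  obtain ⟨y, rfl⟩ : ∃ y, T = t + 2 * τ * y := ⟨(T - t) / (2 * τ), by field_simp; ring⟩
  have hw : expWeight (t + 2 * τ * y) τ t
      = Real.exp (-y) * expWeight (t + 2 * τ * y) (2 * τ) t := by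
    rw [expWeight, expWeight, ← Real.exp_add]
    congr 1
    field_simp
    ring
  have hy : y * Real.exp (-y) ≤ 1 :=
    (Real.mul_exp_neg_le_exp_neg_one y).trans (Real.exp_le_one_iff.2 (by norm_num))
  calc (t + 2 * τ * y - t) * expWeight _ τ t
        = 2 * τ * (y * Real.exp (-y)) * expWeight (t + 2 * τ * y) (2 * τ) t := by rw [hw]; ring
    _ ≤ 2 * τ * 1 * expWeight _ (2 * τ) t := by gcongr; exact expWeight_pos.le
    _ = 2 * τ * expWeight _ (2 * τ) t := by rw [mul_one]

theorem tendsto_sub_mul_expWeight_atBot (hτ : 0 < τ) :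
    Tendsto (fun t => (T - t) * expWeight T τ t) atBot (𝓝 0) := by
  refine squeeze_zero' ?_ (Eventually.of_forall fun t => sub_mul_expWeight_le hτ) ?_
  · filter_upwards [Iic_mem_atBot T] with t ht
    exact mul_nonneg (sub_nonneg.2 ht) expWeight_pos.le
  · simpa using (tendsto_expWeight_atBot (T := T) (by positivity : 0 < 2 * τ)).const_mul (2 * τ)

theorem integrableOn_expWeight (hτ : 0 < τ) : IntegrableOn (expWeight T τ) (Iic T) := by
  have h : expWeight T τ = fun t => Real.exp (-T / τ) * Real.exp (τ⁻¹ * t) := by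
    funext t
    rw [expWeight, ← Real.exp_add]
    ring_nf
  rw [h]
  exact (integrableOn_exp_mul_Iic (inv_pos.2 hτ) T).const_mul _

theorem integrableOn_sub_mul_expWeight (hτ : 0 < τ) :
    IntegrableOn (fun t => (T - t) * expWeight T τ t) (Iic T) := by
  refine ((integrableOn_expWeight (by positivity : 0 < 2 * τ)).const_mul (2 * τ)).mono'
    (by fun_prop) (ae_restrict_of_forall_mem measurableSet_Iic fun t (ht : t ≤ T) => ?_)
  rw [Real.norm_of_nonneg (mul_nonneg (sub_nonneg.2 ht) expWeight_pos.le)]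
  exact sub_mul_expWeight_le hτ

theorem exists_abs_eval_expWeight_mul_le (hτ : 0 ≤ τ) (P : ℝ[X]) :
    ∃ C, ∀ t ≤ T, |P.eval (expWeight T τ t) * expWeight T τ t| ≤ C * expWeight T τ t := by
  obtain ⟨C, hC⟩ := isCompact_Icc.exists_bound_of_continuousOn
    (P.continuous.continuousOn (s := Icc (0 : ℝ) 1))
  refine ⟨C, fun t ht => ?_⟩
  rw [abs_mul, abs_of_pos expWeight_pos]
  exact mul_le_mul_of_nonneg_right (hC _ ⟨expWeight_pos.le, expWeight_le_one hτ ht⟩)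
    expWeight_pos.le

theorem hasDerivAt_mul_eval_X_mul_sq_expWeight (hτ : τ ≠ 0) (ψ : ℝ[X]) (t : ℝ) :
    HasDerivAt (fun t => τ * (X * ψ ^ 2).eval (expWeight T τ t))
      ((ψ + 2 * X * derivative ψ).eval (expWeight T τ t) * ψ.eval (expWeight T τ t) *
        expWeight T τ t) t := by
  refine ((((X * ψ ^ 2).hasDerivAt _).comp t hasDerivAt_expWeight).const_mul τ).congr_deriv ?_
  rw [derivative_X_mul_sq, eval_mul]
  field_simp

end expWeight

section intervalIntegral

variable {i : ℝ → ℝ} {T M t : ℝ}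

theorem abs_intervalIntegral_le_of_abs_le (hM : ∀ s ≤ T, |i s| ≤ M) (ht : t ≤ T) :
    |∫ s in t..T, i s| ≤ M * (T - t) := by
  have := intervalIntegral.norm_integral_le_of_norm_le_const (f := i)
    fun s hs => hM s (uIoc_of_le ht ▸ hs).2
  rwa [abs_of_nonneg (sub_nonneg.2 ht)] at this

theorem hasDerivAt_intervalIntegral_left (hi : ContinuousOn i (Iic T)) (ht : t < T) :
    HasDerivAt (fun u => ∫ s in u..T, i s) (-i t) t :=
  intervalIntegral.integral_hasDerivAt_left
    (hi.mono (uIcc_of_le ht.le ▸ Icc_subset_Iic_self)).intervalIntegrable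
    ((hi.mono Iio_subset_Iic_self).stronglyMeasurableAtFilter isOpen_Iio t ht)
    (hi.continuousAt (Iic_mem_nhds ht))

theorem continuousOn_intervalIntegral_left (hi : ContinuousOn i (Iic T))
    (hM : ∀ s ≤ T, |i s| ≤ M) : ContinuousOn (fun u => ∫ s in u..T, i s) (Iic T) := by
  intro t ht
  rcases (mem_Iic.1 ht).eq_or_lt with rfl | ht
  · have hlim : Tendsto (fun u => M * (t - u)) (𝓝[Iic t] t) (𝓝 0) := by
      simpa using (((continuous_const (y := t)).sub continuous_id).const_mul M
        |>.tendsto t).mono_left (nhdsWithin_le_nhds (s := Iic t))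
    have := squeeze_zero_norm' (f := fun u => ∫ s in u..t, i s)
      (eventually_nhdsWithin_of_forall (s := Iic t)
        fun u hu => abs_intervalIntegral_le_of_abs_le hM hu) hlim
    simpa [ContinuousWithinAt] using this
  · exact (hasDerivAt_intervalIntegral_left hi ht).continuousAt.continuousWithinAt

end intervalIntegral

theorem ContinuousOn.integrableOn_Iic_of_abs_le {f g : ℝ → ℝ} {T : ℝ}
    (hf : ContinuousOn f (Iic T)) (hg : IntegrableOn g (Iic T)) (hfg : ∀ t ≤ T, |f t| ≤ g t) :
    IntegrableOn f (Iic T) :=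
  hg.mono' (hf.aestronglyMeasurable measurableSet_Iic)
    (ae_restrict_of_forall_mem measurableSet_Iic hfg)

theorem integral_Iic_mul_intervalIntegral_eq {T τ K L M : ℝ} {F f i : ℝ → ℝ} (hτ : 0 < τ)
    (hF : ∀ t, HasDerivAt F (f t) t) (hf : ContinuousOn f (Iic T))
    (hFK : ∀ t ≤ T, |F t| ≤ K * expWeight T τ t) (hfL : ∀ t ≤ T, |f t| ≤ L * expWeight T τ t)
    (hi : ContinuousOn i (Iic T)) (hM : ∀ t ≤ T, |i t| ≤ M) :
    ∫ t in Iic T, f t * ∫ s in t..T, i s = ∫ t in Iic T, F t * i t := by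
  set w := expWeight T τ
  set G := fun t => ∫ s in t..T, i s
  have hG : ∀ t ≤ T, |G t| ≤ M * (T - t) := fun t ht => abs_intervalIntegral_le_of_abs_le hM ht
  have hFG : ∀ t ≤ T, |(F * G) t| ≤ K * M * ((T - t) * w t) := fun t ht => by
    rw [Pi.mul_apply, abs_mul]
    calc |F t| * |G t| ≤ K * w t * (M * (T - t)) :=
          mul_le_mul (hFK t ht) (hG t ht) (abs_nonneg _) ((abs_nonneg _).trans (hFK t ht))
      _ = _ := by ring
  have hFG_zero : Tendsto (F * G) (𝓝[<] T) (𝓝 0) := by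
    refine squeeze_zero_norm' (eventually_nhdsWithin_of_forall fun t ht => hFG t (le_of_lt ht)) ?_
    have := ((continuous_const (y := T)).sub continuous_id).mul
      (continuous_expWeight (T := T) (τ := τ)) |>.const_mul (K * M) |>.tendsto T
    simpa using this.mono_left nhdsWithin_le_nhds
  have hFG_atBot : Tendsto (F * G) atBot (𝓝 0) := by
    refine squeeze_zero_norm' (eventually_atBot.2 ⟨T, hFG⟩) ?_
    simpa using (tendsto_sub_mul_expWeight_atBot hτ).const_mul (K * M)
  have hFi : IntegrableOn (F * fun t => -i t) (Iic T) := by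
    refine ((continuous_iff_continuousAt.2 fun t => (hF t).continuousAt).continuousOn.mul
      hi.neg).integrableOn_Iic_of_abs_le
      ((integrableOn_expWeight hτ).const_mul (K * M)) fun t ht => ?_
    rw [Pi.mul_apply, Pi.neg_apply, abs_mul, abs_neg]
    calc |F t| * |i t| ≤ K * w t * M :=
          mul_le_mul (hFK t ht) (hM t ht) (abs_nonneg _) ((abs_nonneg _).trans (hFK t ht))
      _ = _ := by ring
  have hfG : IntegrableOn (f * G) (Iic T) := by
    refine (hf.mul (continuousOn_intervalIntegral_left hi hM)).integrableOn_Iic_of_abs_le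
      ((integrableOn_sub_mul_expWeight hτ).const_mul (L * M)) fun t ht => ?_
    rw [Pi.mul_apply, abs_mul]
    calc |f t| * |G t| ≤ L * w t * (M * (T - t)) :=
          mul_le_mul (hfL t ht) (hG t ht) (abs_nonneg _) ((abs_nonneg _).trans (hfL t ht))
      _ = _ := by ring
  have hparts := integral_Iic_mul_deriv_eq_deriv_mul (fun t _ => hF t)
    (fun t ht => hasDerivAt_intervalIntegral_left hi ht) hFi hfG hFG_zero hFG_atBot
  simpa only [mul_neg, integral_neg, sub_zero, zero_sub, neg_inj] using hparts.symm

theorem integral_Iic_eval_mul_intervalIntegral {T τ M : ℝ} {i : ℝ → ℝ} (hτ : 0 < τ) (ψ : ℝ[X])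
    (hi : ContinuousOn i (Iic T)) (hM : ∀ t ≤ T, |i t| ≤ M) :
    ∫ t in Iic T, (ψ + 2 * X * derivative ψ).eval (expWeight T τ t) * (∫ s in t..T, i s) *
        ψ.eval (expWeight T τ t) * expWeight T τ t
      = τ * ∫ t in Iic T, i t * ψ.eval (expWeight T τ t) ^ 2 * expWeight T τ t := by
  set w := expWeight T τ
  set φ := ψ + 2 * X * derivative ψ
  obtain ⟨K, hK⟩ := exists_abs_eval_expWeight_mul_le (T := T) hτ.le (ψ ^ 2)
  obtain ⟨L, hL⟩ := exists_abs_eval_expWeight_mul_le (T := T) hτ.le (φ * ψ)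
  have hFK : ∀ t ≤ T, |τ * (X * ψ ^ 2).eval (w t)| ≤ τ * K * w t := fun t ht => by
    rw [abs_mul, abs_of_pos hτ, eval_mul, eval_X, mul_comm (w t), mul_assoc]
    exact mul_le_mul_of_nonneg_left (hK t ht) hτ.le
  have hfL : ∀ t ≤ T, |φ.eval (w t) * ψ.eval (w t) * w t| ≤ L * w t := by
    simpa only [eval_mul] using hL
  have hparts := integral_Iic_mul_intervalIntegral_eq hτ
    (hasDerivAt_mul_eval_X_mul_sq_expWeight hτ.ne' ψ) (by fun_prop) hFK hfL hi hM
  calc _ = ∫ t in Iic T, φ.eval (w t) * ψ.eval (w t) * w t * ∫ s in t..T, i s :=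
        integral_congr_ae (Eventually.of_forall fun t => by ring)
    _ = ∫ t in Iic T, τ * (i t * ψ.eval (w t) ^ 2 * w t) := by
        rw [hparts]
        exact integral_congr_ae (Eventually.of_forall fun t => by
          simp only [eval_mul, eval_X, eval_pow]; ring)
    _ = _ := integral_const_mul _ _

theorem stmt_1_general (T τ : ℝ) (hτ : 0 < τ)
    (ω x : ℝ → ℝ)
    (hω : ∀ t, ω t = Real.exp ((t - T) / τ))
    (hx : ∀ t, x t = ω t)
    (I : ℝ → ℝ)
    (hIc : ContinuousOn I (Set.Iic T))
    (hInn : ∀ t ≤ T, 0 ≤ I t)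
    (hIb : ∃ M, ∀ t ≤ T, I t ≤ M)
    (V₀ : ℝ → ℝ) (hV : ∀ t, V₀ t = ∫ s in t..T, I s)
    (n : ℕ)
    (ψ : Polynomial ℝ) (hψd : ψ.degree < (n : WithBot ℕ))
    (lam : ℝ)
    (heig : ∀ φ : Polynomial ℝ, φ.degree < (n : WithBot ℕ) →
      ∫ t in Set.Iic T, φ.eval (x t) * V₀ t * ψ.eval (x t) * ω t
        = lam * ∫ t in Set.Iic T, φ.eval (x t) * (T - t) * ψ.eval (x t) * ω t) :
    lam * ∫ t in Set.Iic T, (ψ.eval (x t)) ^ 2 * ω t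
      = ∫ t in Set.Iic T, I t * (ψ.eval (x t)) ^ 2 * ω t := by
  obtain rfl : ω = expWeight T τ := funext hω
  obtain rfl : x = expWeight T τ := funext hx
  obtain rfl : V₀ = fun t => ∫ s in t..T, I s := funext hV
  obtain ⟨M, hM⟩ := hIb
  have hflow := integral_Iic_eval_mul_intervalIntegral hτ ψ hIc
    fun t ht => (abs_of_nonneg (hInn t ht)).trans_le (hM t ht)
  have htime := integral_Iic_eval_mul_intervalIntegral hτ ψ continuousOn_const
    fun t (_ : t ≤ T) => (abs_one (α := ℝ)).le
  simp only [intervalIntegral.integral_const, smul_eq_mul, mul_one, one_mul] at htime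
  have heig' := heig _ ((degree_add_two_mul_X_mul_derivative_le ψ).trans_lt hψd)
  rw [hflow, htime, mul_left_comm] at heig'
  exact (mul_left_cancel₀ hτ.ne' heig').symm

/-- In the eigenstates of the aggregated execution flow `V/t`, the aggregated
execution flow equals the local execution flow: `λ = ⟨ψ|I|ψ⟩/⟨ψ|ψ⟩`. -/
theorem stmt_1 (T τ : ℝ) (hτ : 0 < τ)
    (ω x : ℝ → ℝ)
    (hω : ∀ t, ω t = Real.exp ((t - T) / τ))
    (hx : ∀ t, x t = ω t)
    (I : ℝ → ℝ)
    (hIc : ContinuousOn I (Set.Iic T))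
    (hInn : ∀ t ≤ T, 0 ≤ I t)
    (hIb : ∃ M, ∀ t ≤ T, I t ≤ M)
    (V₀ : ℝ → ℝ) (hV : ∀ t, V₀ t = ∫ s in t..T, I s)
    (n : ℕ) (hn : 1 ≤ n)
    (ψ : Polynomial ℝ) (hψ0 : ψ ≠ 0) (hψd : ψ.degree < (n : WithBot ℕ))
    (lam : ℝ)
    (heig : ∀ φ : Polynomial ℝ, φ.degree < (n : WithBot ℕ) →
      ∫ t in Set.Iic T, φ.eval (x t) * V₀ t * ψ.eval (x t) * ω t
        = lam * ∫ t in Set.Iic T, φ.eval (x t) * (T - t) * ψ.eval (x t) * ω t) :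
    lam * ∫ t in Set.Iic T, (ψ.eval (x t)) ^ 2 * ω t
      = ∫ t in Set.Iic T, I t * (ψ.eval (x t)) ^ 2 * ω t :=
  stmt_1_general T τ hτ ω x hω hx I hIc hInn hIb V₀ hV n ψ hψd lam heig
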